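/- arXiv:1804.04626 — 5 statements merged into one kernel-verified Lean document; each statement's English description precedes it below -/
import Mathlib

section
/- Let Σ₁ and Σ₂ be two systems Σᵢ: ẋᵢ = fᵢ(xᵢ) + Bᵢuᵢ, yᵢ = Cᵢxᵢ with states xᵢ ∈ ℝ^{nᵢ}, inputs uᵢ ∈ ℝᵐ, outputs yᵢ ∈ ℝᵐ, and fᵢ smooth. Suppose Σᵢ is strictly pᵢ-passive from uᵢ to yᵢ with a common rate λ ≥ 0, certified by a symmetric matrix Pᵢ ∈ ℝ^{nᵢ×nᵢ} of inertia (pᵢ, 0, nᵢ−pᵢ) and εᵢ > 0. Then the negative feedback interconnection u₁ = −y₂ + v₁, u₂ = y₁ + v₂ is strictly (p₁+p₂)-passive from v = (v₁, v₂) to y = (y₁, y₂) with rate λ; specifically, the block-diagonal matrix P = diag(P₁, P₂) is symmetric, has inertia (p₁+p₂, 0, n₁+n₂−p₁−p₂), and together with ε = min(ε₁, ε₂) certifies the differential dissipation inequality 2 δẋᵀ P δx + 2λ δxᵀ P δx + ε ‖δx‖² ≤ 2 δyᵀ δv along the linearized closed-loop dynamics, for all states x = (x₁, x₂), all δx = (δx₁,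 δx₂) and all δv = (δv₁, δv₂). -/
open Matrix
open Polynomial

section aux
variable {n : Type*} [Fintype n] [DecidableEq n]

lemma myCharpoly_conj_unitary (U D : Matrix n n ℝ) (hU : U * star U = 1) :
    (U * D * star U).charpoly = D.charpoly := by
  have hmapC : ∀ (M N : Matrix n n ℝ),
      (M * N).map (C : ℝ →+* ℝ[X]) = M.map C * N.map C := fun M N => Matrix.map_mul
  have hone : (U.map (C : ℝ →+* ℝ[X])) * ((star U).map C) = 1 := by
    rw [← hmapC, hU]; simp
  have h1 : charmatrix (U * D * star U) = U.map C * charmatrix D * (star U).map C := by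
    unfold charmatrix
    simp only [RingHom.mapMatrix_apply]
    rw [hmapC, hmapC, Matrix.mul_sub, Matrix.sub_mul]
    congr 1
    rw [mul_assoc, (scalar_commute (X : ℝ[X]) (fun r' => Commute.all _ _) _).eq,
      ← mul_assoc, hone, one_mul]
  have h2 : (U.map (C : ℝ →+* ℝ[X])).det * ((star U).map C).det = 1 := by
    rw [← det_mul, hone, det_one]
  rw [Matrix.charpoly, Matrix.charpoly, h1, det_mul, det_mul]
  calc (U.map (C : ℝ →+* ℝ[X])).det * (charmatrix D).det * ((star U).map C).det
      = (charmatrix D).det * ((U.map (C : ℝ →+* ℝ[X])).det * ((star U).map C).det) := by ring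
    _ = (charmatrix D).det := by rw [h2, mul_one]

lemma myCharpoly_diagonal (d : n → ℝ) :
    (diagonal d).charpoly = ∏ i, (X - C (d i)) := by
  have : charmatrix (diagonal d) = diagonal fun i => X - C (d i) := by
    ext i j
    by_cases h : i = j
    · subst h; simp [charmatrix_apply_eq]
    · simp [charmatrix_apply_ne _ _ _ h, diagonal_apply_ne _ h]
  rw [Matrix.charpoly, this, det_diagonal]

lemma myRoots_hermitian (A : Matrix n n ℝ) (hA : A.IsHermitian) :
    A.charpoly.roots = Finset.univ.val.map hA.eigenvalues := by
  conv_lhs => rw [hA.spectral_theorem, Unitary.conjStarAlgAut_apply]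
  rw [myCharpoly_conj_unitary _ _ (by
    simpa using (Matrix.mem_unitaryGroup_iff).mp (hA.eigenvectorUnitary).2)]
  have h : (RCLike.ofReal ∘ hA.eigenvalues : n → ℝ) = hA.eigenvalues := by ext i; simp
  rw [h, myCharpoly_diagonal]
  have : ∏ i, (X - C (hA.eigenvalues i))
      = ((Finset.univ.val.map hA.eigenvalues).map fun a => X - C a).prod := by
    rw [Multiset.map_map]; rfl
  rw [this, roots_multiset_prod_X_sub_C]

lemma myCard_filter_eigen (A : Matrix n n ℝ) (hA : A.IsHermitian)
    (p : ℝ → Prop) [DecidablePred p] :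
    (Finset.univ.filter fun i => p (hA.eigenvalues i)).card
      = Multiset.card (A.charpoly.roots.filter p) := by
  rw [myRoots_hermitian A hA, Multiset.filter_map, Multiset.card_map]
  rfl

end aux


/-- The Jacobian matrix `∂f(x)` of `f : ℝⁿ → ℝⁿ` at `x`. -/
noncomputable def jac {n : ℕ} (f : (Fin n → ℝ) → (Fin n → ℝ)) (x : Fin n → ℝ) :
    Matrix (Fin n) (Fin n) ℝ :=
  LinearMap.toMatrix' (fderiv ℝ f x).toLinearMap

/-- A real symmetric matrix `P` has inertia `(p, 0, n - p)`: `p` negative eigenvalues,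
no zero eigenvalues and `n - p` positive eigenvalues, counted with multiplicity. -/
def hasInertia {m : Type*} [Fintype m] [DecidableEq m] (P : Matrix m m ℝ) (p : ℕ) : Prop :=
  ∃ hP : P.IsHermitian,
    (Finset.univ.filter fun i => hP.eigenvalues i < 0).card = p ∧
    (Finset.univ.filter fun i => hP.eigenvalues i = 0).card = 0 ∧
    (Finset.univ.filter fun i => 0 < hP.eigenvalues i).card = Fintype.card m - p

/-- if `Σᵢ : ẋᵢ = fᵢ(xᵢ) + Bᵢuᵢ, yᵢ = Cᵢxᵢ` is strictly `pᵢ`-passive with common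
rate `λ ≥ 0`, certified by a symmetric `Pᵢ` of inertia `(pᵢ, 0, nᵢ - pᵢ)` and `εᵢ > 0`, then
the negative feedback interconnection `u₁ = -y₂ + v₁`, `u₂ = y₁ + v₂` is strictly
`(p₁ + p₂)`-passive from `v = (v₁, v₂)` to `y = (y₁, y₂)` with rate `λ`: the block-diagonal
`P = diag(P₁, P₂)` is symmetric, has inertia `(p₁ + p₂, 0, n₁ + n₂ - p₁ - p₂)`, and, together
with `ε = min ε₁ ε₂ > 0`, certifies the differential dissipation inequality
`2 δẋᵀPδx + 2λ δxᵀPδx + ε ‖δx‖² ≤ 2 δyᵀδv` along the linearized closed loop. -/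
theorem negative_feedback_interconnection_passivity {n₁ n₂ m : ℕ}
    (f₁ : (Fin n₁ → ℝ) → (Fin n₁ → ℝ)) (f₂ : (Fin n₂ → ℝ) → (Fin n₂ → ℝ))
    (hf₁ : ContDiff ℝ (⊤ : ℕ∞) f₁) (hf₂ : ContDiff ℝ (⊤ : ℕ∞) f₂)
    (B₁ : Matrix (Fin n₁) (Fin m) ℝ) (C₁ : Matrix (Fin m) (Fin n₁) ℝ)
    (B₂ : Matrix (Fin n₂) (Fin m) ℝ) (C₂ : Matrix (Fin m) (Fin n₂) ℝ)
    (lam : ℝ) (hlam : 0 ≤ lam) (p₁ p₂ : ℕ)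
    (P₁ : Matrix (Fin n₁) (Fin n₁) ℝ) (P₂ : Matrix (Fin n₂) (Fin n₂) ℝ)
    (ε₁ ε₂ : ℝ) (hε₁ : 0 < ε₁) (hε₂ : 0 < ε₂)
    (hP₁sym : P₁.IsSymm) (hP₂sym : P₂.IsSymm)
    (hP₁in : hasInertia P₁ p₁) (hP₂in : hasInertia P₂ p₂)
    (hpass₁ : ∀ (x δx : Fin n₁ → ℝ) (δu : Fin m → ℝ),
      2 * (((jac f₁ x).mulVec δx + B₁.mulVec δu) ⬝ᵥ P₁.mulVec δx)
          + 2 * lam * (δx ⬝ᵥ P₁.mulVec δx) + ε₁ * (δx ⬝ᵥ δx)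
        ≤ 2 * (C₁.mulVec δx ⬝ᵥ δu))
    (hpass₂ : ∀ (x δx : Fin n₂ → ℝ) (δu : Fin m → ℝ),
      2 * (((jac f₂ x).mulVec δx + B₂.mulVec δu) ⬝ᵥ P₂.mulVec δx)
          + 2 * lam * (δx ⬝ᵥ P₂.mulVec δx) + ε₂ * (δx ⬝ᵥ δx)
        ≤ 2 * (C₂.mulVec δx ⬝ᵥ δu)) :
    (Matrix.fromBlocks P₁ 0 0 P₂).IsSymm ∧
      hasInertia (Matrix.fromBlocks P₁ 0 0 P₂) (p₁ + p₂) ∧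
      0 < min ε₁ ε₂ ∧
      ∀ (x₁ δx₁ : Fin n₁ → ℝ) (x₂ δx₂ : Fin n₂ → ℝ) (δv₁ δv₂ : Fin m → ℝ),
        2 * (Sum.elim
              ((jac f₁ x₁).mulVec δx₁ + B₁.mulVec (-(C₂.mulVec δx₂) + δv₁))
              ((jac f₂ x₂).mulVec δx₂ + B₂.mulVec (C₁.mulVec δx₁ + δv₂))
            ⬝ᵥ (Matrix.fromBlocks P₁ 0 0 P₂).mulVec (Sum.elim δx₁ δx₂))
          + 2 * lam * (Sum.elim δx₁ δx₂
              ⬝ᵥ (Matrix.fromBlocks P₁ 0 0 P₂).mulVec (Sum.elim δx₁ δx₂))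
          + min ε₁ ε₂ * (Sum.elim δx₁ δx₂ ⬝ᵥ Sum.elim δx₁ δx₂)
        ≤ 2 * (Sum.elim (C₁.mulVec δx₁) (C₂.mulVec δx₂) ⬝ᵥ Sum.elim δv₁ δv₂) := by
  obtain ⟨hP₁, h1n, h1z, h1p⟩ := hP₁in
  obtain ⟨hP₂, h2n, h2z, h2p⟩ := hP₂in
  have hPsym : (Matrix.fromBlocks P₁ 0 0 P₂).IsSymm := by
    unfold Matrix.IsSymm
    rw [Matrix.fromBlocks_transpose]
    simp [hP₁sym.eq, hP₂sym.eq]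
  refine ⟨hPsym, ?_, lt_min hε₁ hε₂, ?_⟩
  · have hP : (Matrix.fromBlocks P₁ 0 0 P₂).IsHermitian := by
      unfold Matrix.IsHermitian
      rw [Matrix.conjTranspose_eq_transpose_of_trivial, Matrix.fromBlocks_transpose]
      simp [hP₁sym.eq, hP₂sym.eq]
    have hmul : (Matrix.fromBlocks P₁ 0 0 P₂).charpoly = P₁.charpoly * P₂.charpoly :=
      Matrix.charpoly_fromBlocks_zero₂₁ _ _ _
    have hroots : (Matrix.fromBlocks P₁ 0 0 P₂).charpoly.roots
        = P₁.charpoly.roots + P₂.charpoly.roots := by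
      rw [hmul, Polynomial.roots_mul (P₁.charpoly_monic.mul P₂.charpoly_monic).ne_zero]
    refine ⟨hP, ?_, ?_, ?_⟩
    · rw [myCard_filter_eigen _ hP (· < 0), hroots, Multiset.filter_add, Multiset.card_add,
        ← myCard_filter_eigen _ hP₁ (· < 0), ← myCard_filter_eigen _ hP₂ (· < 0), h1n, h2n]
    · rw [myCard_filter_eigen _ hP (· = 0), hroots, Multiset.filter_add, Multiset.card_add,
        ← myCard_filter_eigen _ hP₁ (· = 0), ← myCard_filter_eigen _ hP₂ (· = 0), h1z, h2z]
    · rw [myCard_filter_eigen _ hP (0 < ·), hroots, Multiset.filter_add, Multiset.card_add,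
        ← myCard_filter_eigen _ hP₁ (0 < ·), ← myCard_filter_eigen _ hP₂ (0 < ·), h1p, h2p]
      have e1 : p₁ ≤ n₁ := by
        rw [← h1n]; exact (Finset.card_filter_le _ _).trans_eq (by simp)
      have e2 : p₂ ≤ n₂ := by
        rw [← h2n]; exact (Finset.card_filter_le _ _).trans_eq (by simp)
      simp only [Fintype.card_sum, Fintype.card_fin]
      omega
  · intro x₁ δx₁ x₂ δx₂ δv₁ δv₂
    have h1 := hpass₁ x₁ δx₁ (-(C₂.mulVec δx₂) + δv₁)
    have h2 := hpass₂ x₂ δx₂ (C₁.mulVec δx₁ + δv₂)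
    have hx1 : 0 ≤ δx₁ ⬝ᵥ δx₁ := Finset.sum_nonneg fun i _ => mul_self_nonneg _
    have hx2 : 0 ≤ δx₂ ⬝ᵥ δx₂ := Finset.sum_nonneg fun i _ => mul_self_nonneg _
    have hmv : (Matrix.fromBlocks P₁ 0 0 P₂).mulVec (Sum.elim δx₁ δx₂)
        = Sum.elim (P₁.mulVec δx₁) (P₂.mulVec δx₂) := by
      rw [Matrix.fromBlocks_mulVec]
      simp
    rw [hmv]
    simp only [sumElim_dotProduct_sumElim, dotProduct_add,
      dotProduct_neg] at h1 h2 ⊢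
    have hcross : C₁.mulVec δx₁ ⬝ᵥ C₂.mulVec δx₂ = C₂.mulVec δx₂ ⬝ᵥ C₁.mulVec δx₁ :=
      dotProduct_comm _ _
    have e1 : min ε₁ ε₂ * (δx₁ ⬝ᵥ δx₁) ≤ ε₁ * (δx₁ ⬝ᵥ δx₁) :=
      mul_le_mul_of_nonneg_right (min_le_left _ _) hx1
    have e2 : min ε₁ ε₂ * (δx₂ ⬝ᵥ δx₂) ≤ ε₂ * (δx₂ ⬝ᵥ δx₂) :=
      mul_le_mul_of_nonneg_right (min_le_right _ _) hx2
    linarith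
end

section
/- Let f : ℝⁿ → ℝⁿ be smooth and suppose there exist a symmetric positive-definite matrix P ∈ ℝ^{n×n}, λ ≥ 0, and ε > 0 such that ∂f(x)ᵀ P + P ∂f(x) + 2λP ⪯ −εI for all x ∈ ℝⁿ (strict 0-dominance). Then there is at most one point x* ∈ ℝⁿ with f(x*) = 0, and every bounded solution x : [0, ∞) → ℝⁿ of ẋ = f(x) converges, as t → ∞, to a point x* satisfying f(x*) = 0; in particular all bounded solutions converge to the same fixed point. -/
open Matrix

open Filter MeasureTheory Topology

lemma quad_le_sum_abs {n : ℕ} (M : Matrix (Fin n) (Fin n) ℝ) (v : Fin n → ℝ) :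
    v ⬝ᵥ (M *ᵥ v) ≤ (∑ i, ∑ j, |M i j|) * (v ⬝ᵥ v) := by
  have key : ∀ i j : Fin n, v i * (M i j * v j) ≤ |M i j| * (v ⬝ᵥ v) := by
    intro i j
    have hi : v i * v i ≤ v ⬝ᵥ v :=
      Finset.single_le_sum (fun k _ => mul_self_nonneg (v k)) (Finset.mem_univ i)
    have hj : v j * v j ≤ v ⬝ᵥ v :=
      Finset.single_le_sum (fun k _ => mul_self_nonneg (v k)) (Finset.mem_univ j)
    have h1 : v i * (M i j * v j) ≤ |M i j| * |v i * v j| := by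
      rw [abs_mul]
      calc v i * (M i j * v j) ≤ |v i * (M i j * v j)| := le_abs_self _
      _ = |M i j| * (|v i| * |v j|) := by rw [abs_mul, abs_mul]; ring
    refine h1.trans (mul_le_mul_of_nonneg_left ?_ (abs_nonneg _))
    cases abs_cases (v i * v j) with
    | inl h => nlinarith [h.1]
    | inr h => nlinarith [h.1]
  calc v ⬝ᵥ (M *ᵥ v) = ∑ i, ∑ j, v i * (M i j * v j) := by
        simp [dotProduct, Matrix.mulVec, Finset.mul_sum]
  _ ≤ ∑ i, ∑ j, |M i j| * (v ⬝ᵥ v) :=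
        Finset.sum_le_sum fun i _ => Finset.sum_le_sum fun j _ => key i j
  _ = (∑ i, ∑ j, |M i j|) * (v ⬝ᵥ v) := by rw [Finset.sum_mul]; simp [Finset.sum_mul]

lemma quad_symm {n : ℕ} {P : Matrix (Fin n) (Fin n) ℝ} (hP : P.IsSymm)
    (u w : Fin n → ℝ) : u ⬝ᵥ (P *ᵥ w) = w ⬝ᵥ (P *ᵥ u) := by
  rw [Matrix.dotProduct_mulVec, ← Matrix.mulVec_transpose, hP.eq, dotProduct_comm]

lemma quad_lower {n : ℕ} {P : Matrix (Fin n) (Fin n) ℝ} (hPsym : P.IsSymm)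
    (hPpd : P.PosDef) (v : Fin n → ℝ) :
    v ⬝ᵥ v ≤ (∑ i, ∑ j, |P⁻¹ i j|) * (v ⬝ᵥ (P *ᵥ v)) := by
  set K := ∑ i, ∑ j, |P⁻¹ i j| with hK
  have hKnn : 0 ≤ K := Finset.sum_nonneg fun i _ => Finset.sum_nonneg fun j _ => abs_nonneg _
  set w := P⁻¹ *ᵥ v with hw
  have hPw : P *ᵥ w = v := by
    rw [hw, Matrix.mulVec_mulVec, Matrix.mul_nonsing_inv _ (isUnit_iff_ne_zero.mpr hPpd.det_pos.ne'), Matrix.one_mulVec]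
  have hq : ∀ u : Fin n → ℝ, 0 ≤ u ⬝ᵥ (P *ᵥ u) := by
    intro u
    simpa using hPpd.posSemidef.dotProduct_mulVec_nonneg u
  set c := v ⬝ᵥ (P *ᵥ v) with hc
  set a := w ⬝ᵥ (P *ᵥ w) with ha
  have haK : a ≤ K * (v ⬝ᵥ v) := by
    have : a = v ⬝ᵥ (P⁻¹ *ᵥ v) := by rw [ha, hPw, dotProduct_comm]
    rw [this]; exact quad_le_sum_abs _ _
  have hcross : v ⬝ᵥ (P *ᵥ w) = v ⬝ᵥ v := by rw [hPw]
  have hcross2 : w ⬝ᵥ (P *ᵥ v) = v ⬝ᵥ v := by rw [quad_symm hPsym, hPw]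
  have hquad : ∀ t : ℝ, 0 ≤ a * (t * t) + (2 * (v ⬝ᵥ v)) * t + c := by
    intro t
    have h0 := hq (v + t • w)
    simp only [Matrix.mulVec_add, Matrix.mulVec_smul, dotProduct_add,
      add_dotProduct, dotProduct_smul, smul_dotProduct,
      smul_eq_mul] at h0
    rw [hcross, hcross2] at h0
    nlinarith [h0]
  have hdisc := discrim_le_zero hquad
  rw [discrim] at hdisc
  have hvv : 0 ≤ v ⬝ᵥ v := Finset.sum_nonneg fun i _ => mul_self_nonneg _
  rcases eq_or_lt_of_le hvv with h0 | h0
  · rw [← h0]; exact mul_nonneg hKnn (hq v)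
  · have h4 : (v ⬝ᵥ v) ^ 2 ≤ a * c := by nlinarith
    have h5 : a * c ≤ K * (v ⬝ᵥ v) * c := mul_le_mul_of_nonneg_right haK (hq v)
    have h6 : (v ⬝ᵥ v) * (v ⬝ᵥ v) ≤ (v ⬝ᵥ v) * (K * c) := by nlinarith
    exact le_of_mul_le_mul_left h6 h0


lemma key_ineq {n : ℕ} (f : (Fin n → ℝ) → (Fin n → ℝ))
    (P : Matrix (Fin n) (Fin n) ℝ) (hPsym : P.IsSymm) (hPpd : P.PosDef)
    (lam ε : ℝ) (hlam : 0 ≤ lam)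
    (hdom : ∀ x : Fin n → ℝ,
      (-((jac f x)ᵀ * P + P * jac f x + (2 * lam) • P + ε • 1)).PosSemidef)
    (y v : Fin n → ℝ) :
    2 * (v ⬝ᵥ (P *ᵥ (jac f y *ᵥ v))) + ε * (v ⬝ᵥ v) ≤ 0 := by
  have h := (hdom y).dotProduct_mulVec_nonneg v
  simp only [star_trivial, Matrix.neg_mulVec, dotProduct_neg, Matrix.add_mulVec,
    dotProduct_add, Matrix.smul_mulVec, dotProduct_smul, smul_eq_mul,
    Matrix.one_mulVec, Matrix.mulVec_mulVec] at h
  -- h : 0 ≤ -(... + ... + 2*lam * (v ⬝ᵥ P *ᵥ v) + ε * (v ⬝ᵥ v))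
  have h1 : v ⬝ᵥ (((jac f y)ᵀ * P) *ᵥ v) = v ⬝ᵥ (P *ᵥ (jac f y *ᵥ v)) := by
    rw [Matrix.dotProduct_mulVec, ← Matrix.vecMul_vecMul, Matrix.vecMul_transpose,
      ← Matrix.dotProduct_mulVec, quad_symm hPsym]
  have h2 : v ⬝ᵥ ((P * jac f y) *ᵥ v) = v ⬝ᵥ (P *ᵥ (jac f y *ᵥ v)) := by
    rw [Matrix.mulVec_mulVec]
  have hP : 0 ≤ v ⬝ᵥ (P *ᵥ v) := by simpa using hPpd.posSemidef.dotProduct_mulVec_nonneg v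
  rw [h1, h2] at h
  nlinarith [h, mul_nonneg hlam hP]

lemma jac_mulVec {n : ℕ} (f : (Fin n → ℝ) → (Fin n → ℝ)) (y v : Fin n → ℝ) :
    jac f y *ᵥ v = fderiv ℝ f y v := by
  rw [jac, ← Matrix.toLin'_apply, Matrix.toLin'_toMatrix']
  rfl

lemma hasDerivAt_quadform {n : ℕ} (P : Matrix (Fin n) (Fin n) ℝ)
    {g : ℝ → Fin n → ℝ} {g' : Fin n → ℝ} {t : ℝ} (hg : HasDerivAt g g' t) :
    HasDerivAt (fun s => g s ⬝ᵥ (P *ᵥ g s)) (g' ⬝ᵥ (P *ᵥ g t) + g t ⬝ᵥ (P *ᵥ g')) t := by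
  have hgi : ∀ i, HasDerivAt (fun s => g s i) (g' i) t := fun i => hasDerivAt_pi.mp hg i
  have h : HasDerivAt (fun s => ∑ i, g s i * ∑ j, P i j * g s j)
      (∑ i, (g' i * ∑ j, P i j * g t j + g t i * ∑ j, P i j * g' j)) t :=
    HasDerivAt.fun_sum fun i _ =>
      (hgi i).mul (HasDerivAt.fun_sum fun j _ => (hgi j).const_mul (P i j))
  convert h using 1
  all_goals simp [dotProduct, Matrix.mulVec, Finset.sum_add_distrib]

lemma hasDerivAt_linform {n : ℕ} (P : Matrix (Fin n) (Fin n) ℝ) (v : Fin n → ℝ)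
    {g : ℝ → Fin n → ℝ} {g' : Fin n → ℝ} {t : ℝ} (hg : HasDerivAt g g' t) :
    HasDerivAt (fun s => v ⬝ᵥ (P *ᵥ g s)) (v ⬝ᵥ (P *ᵥ g')) t := by
  have hgi : ∀ i, HasDerivAt (fun s => g s i) (g' i) t := fun i => hasDerivAt_pi.mp hg i
  have h : HasDerivAt (fun s => ∑ i, v i * ∑ j, P i j * g s j)
      (∑ i, v i * ∑ j, P i j * g' j) t :=
    HasDerivAt.fun_sum fun i _ =>
      (HasDerivAt.fun_sum fun j _ => (hgi j).const_mul (P i j)).const_mul (v i)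
  convert h using 1
  all_goals simp [dotProduct, Matrix.mulVec]

lemma zd_unique_zero {n : ℕ} (f : (Fin n → ℝ) → (Fin n → ℝ)) (hf : ContDiff ℝ (⊤ : ℕ∞) f)
    (P : Matrix (Fin n) (Fin n) ℝ) (hPsym : P.IsSymm) (hPpd : P.PosDef)
    (lam ε : ℝ) (hlam : 0 ≤ lam) (hε : 0 < ε)
    (hdom : ∀ x : Fin n → ℝ,
      (-((jac f x)ᵀ * P + P * jac f x + (2 * lam) • P + ε • 1)).PosSemidef)
    (a b : Fin n → ℝ) (ha : f a = 0) (hb : f b = 0) : a = b := by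
  set v := a - b with hv
  set γ : ℝ → Fin n → ℝ := fun s => b + s • v with hγdef
  have hfd := hf.differentiable (by simp)
  have hγ : ∀ s : ℝ, HasDerivAt γ v s := by
    intro s
    simpa [hγdef] using ((hasDerivAt_id s).smul_const v).const_add b
  set h : ℝ → ℝ := fun s => v ⬝ᵥ (P *ᵥ f (γ s)) with hhdef
  have hh : ∀ s : ℝ, HasDerivAt h (v ⬝ᵥ (P *ᵥ (jac f (γ s) *ᵥ v))) s := by
    intro s
    rw [jac_mulVec]
    exact hasDerivAt_linform P v ((hfd (γ s)).hasFDerivAt.comp_hasDerivAt s (hγ s))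
  have hγ1 : γ 1 = a := by simp [hγdef, hv]
  have hγ0 : γ 0 = b := by simp [hγdef]
  have h1 : h 1 = 0 := by simp [hhdef, hγ1, ha]
  have h0 : h 0 = 0 := by simp [hhdef, hγ0, hb]
  obtain ⟨s, _, hs⟩ := exists_hasDerivAt_eq_slope h
    (fun s => v ⬝ᵥ (P *ᵥ (jac f (γ s) *ᵥ v))) zero_lt_one
    (fun s _ => (hh s).continuousAt.continuousWithinAt) (fun s _ => hh s)
  rw [h1, h0] at hs
  simp only [sub_zero, div_one] at hs
  have hkey := key_ineq f P hPsym hPpd lam ε hlam hdom (γ s) v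
  rw [hs] at hkey
  have hvv : v ⬝ᵥ v = 0 := by
    have hnn : 0 ≤ v ⬝ᵥ v := Finset.sum_nonneg fun i _ => mul_self_nonneg _
    nlinarith
  have := dotProduct_self_eq_zero.mp hvv
  rw [hv, sub_eq_zero] at this
  exact this


/-- if `f : ℝⁿ → ℝⁿ` is smooth and strictly `0`-dominant, i.e. there are a
symmetric positive-definite `P`, `λ ≥ 0` and `ε > 0` with
`∂f(x)ᵀP + P∂f(x) + 2λP ⪯ -εI` for all `x`, then `f` has at most one zero, and every
bounded solution of `ẋ = f(x)` on `[0, ∞)` converges to a zero of `f`; in particular all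
bounded solutions converge to the same fixed point. -/
theorem zero_dominant_unique_fixed_point_and_convergence {n : ℕ}
    (f : (Fin n → ℝ) → (Fin n → ℝ)) (hf : ContDiff ℝ (⊤ : ℕ∞) f)
    (P : Matrix (Fin n) (Fin n) ℝ) (hPsym : P.IsSymm) (hPpd : P.PosDef)
    (lam ε : ℝ) (hlam : 0 ≤ lam) (hε : 0 < ε)
    (hdom : ∀ x : Fin n → ℝ,
      (-((jac f x)ᵀ * P + P * jac f x + (2 * lam) • P + ε • 1)).PosSemidef) :
    (∀ a b : Fin n → ℝ, f a = 0 → f b = 0 → a = b) ∧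
      ∀ x : ℝ → (Fin n → ℝ), (∀ t : ℝ, 0 ≤ t → HasDerivAt x (f (x t)) t) →
        (∃ M : ℝ, ∀ t : ℝ, 0 ≤ t → ‖x t‖ ≤ M) →
        ∃ xs : Fin n → ℝ, f xs = 0 ∧ Filter.Tendsto x Filter.atTop (nhds xs) := by

  refine ⟨fun a b ha hb => zd_unique_zero f hf P hPsym hPpd lam ε hlam hε hdom a b ha hb, ?_⟩
  intro x hx _
  have hfd := hf.differentiable (by simp)
  have hcf : Continuous f := hf.continuous
  set g : ℝ → Fin n → ℝ := fun t => f (x t) with hgdef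
  have hg' : ∀ t : ℝ, 0 ≤ t → HasDerivAt g (jac f (x t) *ᵥ g t) t := by
    intro t ht
    rw [jac_mulVec]
    exact (hfd (x t)).hasFDerivAt.comp_hasDerivAt t (hx t ht)
  set q : ℝ → ℝ := fun t => g t ⬝ᵥ (P *ᵥ g t) with hqdef
  have hqnn : ∀ t, 0 ≤ q t := fun t => by simpa using hPpd.posSemidef.dotProduct_mulVec_nonneg (g t)
  have hggnn : ∀ t, 0 ≤ g t ⬝ᵥ g t := fun t => Finset.sum_nonneg fun i _ => mul_self_nonneg _
  set K : ℝ := (∑ i, ∑ j, |P i j|) + 1 with hKdef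
  have hK : 0 < K := by
    have : (0:ℝ) ≤ ∑ i, ∑ j, |P i j| :=
      Finset.sum_nonneg fun i _ => Finset.sum_nonneg fun j _ => abs_nonneg _
    linarith
  set c : ℝ := ε / K with hcdef
  have hc : 0 < c := div_pos hε hK
  -- derivative bound for q
  have hq' : ∀ t : ℝ, 0 ≤ t → HasDerivAt q
      ((jac f (x t) *ᵥ g t) ⬝ᵥ (P *ᵥ g t) + g t ⬝ᵥ (P *ᵥ (jac f (x t) *ᵥ g t))) t :=
    fun t ht => hasDerivAt_quadform P (hg' t ht)
  have hD : ∀ t : ℝ, 0 ≤ t →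
      (jac f (x t) *ᵥ g t) ⬝ᵥ (P *ᵥ g t) + g t ⬝ᵥ (P *ᵥ (jac f (x t) *ᵥ g t)) ≤ -(c * q t) := by
    intro t ht
    have hsymm : (jac f (x t) *ᵥ g t) ⬝ᵥ (P *ᵥ g t) = g t ⬝ᵥ (P *ᵥ (jac f (x t) *ᵥ g t)) :=
      quad_symm hPsym _ _
    have hkey := key_ineq f P hPsym hPpd lam ε hlam hdom (x t) (g t)
    have hqle : q t ≤ K * (g t ⬝ᵥ g t) := by
      have := quad_le_sum_abs P (g t)
      have h2 : (∑ i, ∑ j, |P i j|) * (g t ⬝ᵥ g t) ≤ K * (g t ⬝ᵥ g t) := by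
        apply mul_le_mul_of_nonneg_right _ (hggnn t)
        simp [hKdef]
      exact this.trans h2
    rw [hsymm]
    have hcq : c * q t ≤ ε * (g t ⬝ᵥ g t) := by
      rw [hcdef, div_mul_eq_mul_div, div_le_iff₀ hK]
      calc ε * q t ≤ ε * (K * (g t ⬝ᵥ g t)) := by
            exact mul_le_mul_of_nonneg_left hqle hε.le
      _ = ε * (g t ⬝ᵥ g t) * K := by ring
    linarith
  -- the weighted function W is antitone
  set W : ℝ → ℝ := fun t => Real.exp (c * t) * q t with hWdef
  have hW' : ∀ t : ℝ, 0 ≤ t → HasDerivAt W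
      (Real.exp (c * t) * c * q t + Real.exp (c * t) *
        ((jac f (x t) *ᵥ g t) ⬝ᵥ (P *ᵥ g t) + g t ⬝ᵥ (P *ᵥ (jac f (x t) *ᵥ g t)))) t := by
    intro t ht
    have he : HasDerivAt (fun t => Real.exp (c * t)) (Real.exp (c * t) * c) t := by
      simpa using ((hasDerivAt_id t).const_mul c).exp
    exact he.mul (hq' t ht)
  have hWanti : AntitoneOn W (Set.Ici (0:ℝ)) := by
    apply antitoneOn_of_deriv_nonpos (convex_Ici 0)
    · exact fun t ht => ((hW' t ht).continuousAt).continuousWithinAt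
    · rw [interior_Ici]
      exact fun t ht => ((hW' t (le_of_lt ht)).differentiableAt).differentiableWithinAt
    · rw [interior_Ici]
      intro t ht
      rw [(hW' t ht.le).deriv]
      have h1 := hD t ht.le
      have h2 := Real.exp_pos (c * t)
      nlinarith [mul_le_mul_of_nonneg_left h1 h2.le]
  have hqbound : ∀ t : ℝ, 0 ≤ t → q t ≤ q 0 * Real.exp (-(c * t)) := by
    intro t ht
    have h1 : W t ≤ W 0 := hWanti Set.self_mem_Ici ht ht
    have h2 : W 0 = q 0 := by simp [hWdef]
    rw [h2] at h1
    calc q t = Real.exp (-(c * t)) * (Real.exp (c * t) * q t) := by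
          rw [← mul_assoc, ← Real.exp_add]; simp
    _ ≤ Real.exp (-(c * t)) * q 0 := mul_le_mul_of_nonneg_left h1 (Real.exp_nonneg _)
    _ = q 0 * Real.exp (-(c * t)) := mul_comm _ _
  -- norm bound on g
  set K₂ : ℝ := ∑ i, ∑ j, |P⁻¹ i j| with hK2def
  have hK2nn : 0 ≤ K₂ := Finset.sum_nonneg fun i _ => Finset.sum_nonneg fun j _ => abs_nonneg _
  set C : ℝ := Real.sqrt (K₂ * q 0) with hCdef
  have hgnorm : ∀ t : ℝ, 0 ≤ t → ‖g t‖ ≤ C * Real.exp (-(c / 2) * t) := by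
    intro t ht
    have h1 : g t ⬝ᵥ g t ≤ K₂ * q t := quad_lower hPsym hPpd (g t)
    have h2 : K₂ * q t ≤ (K₂ * q 0) * Real.exp (-(c * t)) := by
      calc K₂ * q t ≤ K₂ * (q 0 * Real.exp (-(c * t))) :=
            mul_le_mul_of_nonneg_left (hqbound t ht) hK2nn
      _ = (K₂ * q 0) * Real.exp (-(c * t)) := by ring
    have h3 : ‖g t‖ ≤ Real.sqrt (g t ⬝ᵥ g t) := by
      rw [pi_norm_le_iff_of_nonneg (Real.sqrt_nonneg _)]
      intro i
      rw [Real.norm_eq_abs, ← Real.sqrt_sq_eq_abs]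
      apply Real.sqrt_le_sqrt
      have : g t i ^ 2 = g t i * g t i := sq (g t i) ▸ by ring
      rw [this]
      exact Finset.single_le_sum (fun k _ => mul_self_nonneg (g t k)) (Finset.mem_univ i)
    have h4 : Real.sqrt (g t ⬝ᵥ g t) ≤ Real.sqrt ((K₂ * q 0) * Real.exp (-(c * t))) :=
      Real.sqrt_le_sqrt (h1.trans h2)
    have h5 : Real.sqrt ((K₂ * q 0) * Real.exp (-(c * t))) = C * Real.exp (-(c / 2) * t) := by
      rw [Real.sqrt_mul (mul_nonneg hK2nn (hqnn 0)), ← hCdef]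
      congr 1
      have : Real.exp (-(c * t)) = (Real.exp (-(c / 2) * t)) ^ 2 := by
        rw [sq, ← Real.exp_add]; ring_nf
      rw [this, Real.sqrt_sq (Real.exp_nonneg _)]
    exact h3.trans (h4.trans_eq h5)
  -- integrability of g on (0, ∞)
  have hxcOn : ContinuousOn x (Set.Ici (0:ℝ)) :=
    fun t ht => ((hx t ht).continuousAt).continuousWithinAt
  have hgcOn : ContinuousOn g (Set.Ici (0:ℝ)) := hcf.comp_continuousOn hxcOn
  have hInt : IntegrableOn g (Set.Ioi (0:ℝ)) := by
    apply Integrable.mono' (g := fun t => C * Real.exp (-(c / 2) * t))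
    · exact (exp_neg_integrableOn_Ioi 0 (by linarith : 0 < c / 2)).const_mul C
    · exact ((hgcOn.mono Set.Ioi_subset_Ici_self).aestronglyMeasurable measurableSet_Ioi)
    · filter_upwards [ae_restrict_mem measurableSet_Ioi] with t ht
      exact hgnorm t (le_of_lt ht)
  -- FTC and limit
  have hFTC : ∀ t : ℝ, 0 ≤ t → x t = x 0 + ∫ s in (0:ℝ)..t, g s := by
    intro t ht
    have hi : IntervalIntegrable g volume 0 t := by
      apply ContinuousOn.intervalIntegrable
      apply hgcOn.mono
      rw [Set.uIcc_of_le ht]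
      exact fun s hs => hs.1
    have := intervalIntegral.integral_eq_sub_of_hasDerivAt
      (f := x) (f' := g) (fun s hs => by
        rw [Set.uIcc_of_le ht] at hs
        exact hx s hs.1) hi
    rw [this]
    abel
  have hlim : Tendsto (fun t => ∫ s in (0:ℝ)..t, g s) atTop (𝓝 (∫ s in Set.Ioi (0:ℝ), g s)) :=
    intervalIntegral_tendsto_integral_Ioi 0 hInt tendsto_id
  refine ⟨x 0 + ∫ s in Set.Ioi (0:ℝ), g s, ?_, ?_⟩
  case refine_2 =>
    apply (tendsto_const_nhds.add hlim).congr'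
    filter_upwards [eventually_ge_atTop (0:ℝ)] with t ht
    exact (hFTC t ht).symm
  case refine_1 =>
    have hxs : Tendsto x atTop (𝓝 (x 0 + ∫ s in Set.Ioi (0:ℝ), g s)) := by
      apply (tendsto_const_nhds.add hlim).congr'
      filter_upwards [eventually_ge_atTop (0:ℝ)] with t ht
      exact (hFTC t ht).symm
    have hg0 : Tendsto g atTop (𝓝 0) := by
      apply squeeze_zero_norm' (a := fun t => C * Real.exp (-(c / 2) * t))
      · filter_upwards [eventually_ge_atTop (0:ℝ)] with t ht
        exact hgnorm t ht
      · have h1 : Tendsto (fun t : ℝ => (c / 2) * t) atTop atTop :=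
          Tendsto.const_mul_atTop (by linarith) tendsto_id
        have h2 : Tendsto (fun t : ℝ => Real.exp (-((c / 2) * t))) atTop (𝓝 0) :=
          Real.tendsto_exp_neg_atTop_nhds_zero.comp h1
        have h3 : Tendsto (fun t : ℝ => C * Real.exp (-((c / 2) * t))) atTop (𝓝 (C * 0)) :=
          h2.const_mul C
        rw [mul_zero] at h3
        exact h3.congr (by intro t; ring_nf)
    have hgxs : Tendsto g atTop (𝓝 (f (x 0 + ∫ s in Set.Ioi (0:ℝ), g s))) :=
      (hcf.tendsto _).comp hxs
    exact tendsto_nhds_unique hgxs hg0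
end

section
/- Let φ : ℝ → ℝ satisfy the stiffening assumption and let k > 0. If φ'(0) < k, then the equation φ(x) = k x has at least three distinct real solutions: x = 0, some x* > 0, and −x*. Consequently, for the positive-feedback op-amp circuit whose equilibria are the solutions of φ(x) = (−1/R₀ + α R₁/(R₁ + R_a)) x, the condition φ'(0) < −1/R₀ + α R₁/(R₁ + R_a) (with −1/R₀ + α R₁/(R₁ + R_a) > 0) guarantees the existence of three distinct equilibrium points. -/
/-- The stiffening assumption on a static nonlinearity `φ : ℝ → ℝ`:
`φ` is smooth, odd, has nonnegative derivative, and for every `k > 0` there is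
`r > 0` such that `y * φ y - k * y ^ 2 > 0` whenever `|y| > r`. -/
def Stiffening (φ : ℝ → ℝ) : Prop :=
  ContDiff ℝ (⊤ : ℕ∞) φ ∧ (∀ y : ℝ, φ (-y) = -φ y) ∧ (∀ y : ℝ, 0 ≤ deriv φ y) ∧
    ∀ k : ℝ, 0 < k → ∃ r : ℝ, 0 < r ∧ ∀ y : ℝ, r < |y| → 0 < y * φ y - k * y ^ 2

lemma stiffening_main (φ : ℝ → ℝ) (hφ : Stiffening φ) (k : ℝ) (hk : 0 < k)
    (hd : deriv φ 0 < k) :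
    φ 0 = k * 0 ∧ ∃ xs : ℝ, 0 < xs ∧ φ xs = k * xs ∧ φ (-xs) = k * (-xs) := by
  obtain ⟨hsm, hodd, hderiv, hstiff⟩ := hφ
  have hφ0 : φ 0 = 0 := by
    have := hodd 0; simp at this; linarith
  refine ⟨by simpa using hφ0, ?_⟩
  set g : ℝ → ℝ := fun x => φ x - k * x with hg
  have hcont : Continuous g := (hsm.continuous).sub (continuous_const.mul continuous_id)
  have hdiff : DifferentiableAt ℝ φ 0 := (hsm.differentiable (by simp)) 0
  have hgd : HasDerivAt g (deriv φ 0 - k) 0 := by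
    have h := (hdiff.hasDerivAt.sub ((hasDerivAt_id (0:ℝ)).const_mul k))
    rw [mul_one] at h
    exact h
  -- find small x > 0 with g x < 0
  have hslope : Filter.Tendsto (slope g 0) (nhdsWithin 0 {(0:ℝ)}ᶜ) (nhds (deriv φ 0 - k)) :=
    hasDerivAt_iff_tendsto_slope.mp hgd
  have hslope' : Filter.Tendsto (slope g 0) (nhdsWithin 0 (Set.Ioi 0)) (nhds (deriv φ 0 - k)) :=
    hslope.mono_left (nhdsWithin_mono _ (fun x hx => ne_of_gt hx))
  have hneg : ∀ᶠ x in nhdsWithin 0 (Set.Ioi 0), slope g 0 x < 0 :=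
    hslope'.eventually_lt_const (by linarith)
  have hmem : ∀ᶠ x in nhdsWithin 0 (Set.Ioi 0), x ∈ Set.Ioi (0:ℝ) :=
    eventually_mem_nhdsWithin
  obtain ⟨x, hxs, hx0⟩ := (hneg.and hmem).exists
  have hx0 : (0:ℝ) < x := hx0
  have hgx : g x < 0 := by
    have : slope g 0 x = g x / x := by
      simp [slope, hg, hφ0, div_eq_inv_mul]
    rw [this] at hxs
    have := mul_neg_of_neg_of_pos hxs hx0
    rwa [div_mul_cancel₀ _ hx0.ne'] at this
  -- find large y with g y > 0
  obtain ⟨r, hr, hbig⟩ := hstiff k hk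
  set y : ℝ := max r x + 1 with hy
  have hxy : x < y := lt_of_le_of_lt (le_max_right r x) (lt_add_one _)
  have hry : r < |y| := by
    have h1 : r < y := lt_of_le_of_lt (le_max_left r x) (lt_add_one _)
    rwa [abs_of_pos (hr.trans h1)]
  have hypos : 0 < y := hr.trans (lt_of_le_of_lt (le_max_left r x) (lt_add_one _))
  have hgy : 0 < g y := by
    have h := hbig y hry
    have hy2 : y * g y = y * φ y - k * y ^ 2 := by simp only [hg]; ring
    nlinarith [h, hypos]
  -- intermediate value
  have hIcc : (0:ℝ) ∈ Set.Icc (g x) (g y) := ⟨hgx.le, hgy.le⟩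
  obtain ⟨c, hc, hgc⟩ := intermediate_value_Icc hxy.le (hcont.continuousOn) hIcc
  have hcpos : 0 < c := lt_of_lt_of_le hx0 hc.1
  refine ⟨c, hcpos, ?_, ?_⟩
  · have : φ c - k * c = 0 := hgc
    linarith
  · have : φ c - k * c = 0 := hgc
    rw [hodd c]; ring_nf; linarith

/-- if `φ` satisfies the stiffening assumption, `k > 0` and `φ'(0) < k`, then
the equation `φ(x) = k x` has at least three distinct solutions: `0`, some `x* > 0` and `-x*`.
Consequently, for the positive-feedback op-amp circuit whose equilibria solve
`φ(x) = (-1/R₀ + α R₁/(R₁ + R_a)) x`, the condition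
`φ'(0) < -1/R₀ + α R₁/(R₁ + R_a)` (with this constant positive) guarantees three distinct
equilibrium points. -/
theorem bistability_three_equilibria (φ : ℝ → ℝ) (hφ : Stiffening φ) :
    (∀ k : ℝ, 0 < k → deriv φ 0 < k →
      φ 0 = k * 0 ∧ ∃ xs : ℝ, 0 < xs ∧ φ xs = k * xs ∧ φ (-xs) = k * (-xs)) ∧
    (∀ R₀ R₁ Ra α : ℝ, 0 < R₀ → 0 < R₁ → 0 < Ra → 0 < α →
      0 < -1 / R₀ + α * R₁ / (R₁ + Ra) →
      deriv φ 0 < -1 / R₀ + α * R₁ / (R₁ + Ra) →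
      φ 0 = (-1 / R₀ + α * R₁ / (R₁ + Ra)) * 0 ∧
        ∃ xs : ℝ, 0 < xs ∧ φ xs = (-1 / R₀ + α * R₁ / (R₁ + Ra)) * xs ∧
          φ (-xs) = (-1 / R₀ + α * R₁ / (R₁ + Ra)) * (-xs)) := by
  exact ⟨fun k hk hd => stiffening_main φ hφ k hk hd,
    fun R₀ R₁ Ra α h0 h1 h2 h3 hpos hd => stiffening_main φ hφ _ hpos hd⟩
end

section
/- Let τ > 0 and consider the third-order RC ladder transfer function G(s) = (1/τ³) / (s³ + (5/τ)s² + (6/τ²)s + 1/τ³). All three poles of G are real and negative; write them as −β₁, −β₂, −β₃ with 0 < β₁ < β₂ < β₃. Then for every λ with max{β₂, (β₁ + β₂ + β₃)/3} < λ < β₃: (1) Re{ G(jω − λ) } ≥ 0 for all ω ∈ ℝ, and (2) G(s − λ) has exactly 2 poles in the open right half-plane; hence G is strictly 2-passive with rate λ. -/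
lemma cubic_root (a b : ℝ) (hab : a ≤ b)
    (ha : a^3 - 5*a^2 + 6*a - 1 ≤ 0) (hb : 0 ≤ b^3 - 5*b^2 + 6*b - 1) :
    ∃ r, r ∈ Set.Icc a b ∧ r^3 - 5*r^2 + 6*r - 1 = 0 := by
  have hc : ContinuousOn (fun x : ℝ => x^3 - 5*x^2 + 6*x - 1) (Set.Icc a b) := by
    fun_prop
  obtain ⟨r, hr, hr0⟩ := intermediate_value_Icc hab hc ⟨ha, hb⟩
  exact ⟨r, hr, hr0⟩

lemma cubic_root' (a b : ℝ) (hab : a ≤ b)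
    (ha : 0 ≤ a^3 - 5*a^2 + 6*a - 1) (hb : b^3 - 5*b^2 + 6*b - 1 ≤ 0) :
    ∃ r, r ∈ Set.Icc a b ∧ r^3 - 5*r^2 + 6*r - 1 = 0 := by
  have hc : ContinuousOn (fun x : ℝ => x^3 - 5*x^2 + 6*x - 1) (Set.Icc a b) := by
    fun_prop
  obtain ⟨r, hr, hr0⟩ := intermediate_value_Icc' hab hc ⟨hb, ha⟩
  exact ⟨r, hr, hr0⟩

lemma three_roots : ∃ r₁ r₂ r₃ : ℝ, 0 < r₁ ∧ r₁ < r₂ ∧ r₂ < r₃ ∧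
    r₁ + r₂ + r₃ = 5 ∧ r₁*r₂ + r₁*r₃ + r₂*r₃ = 6 ∧ r₁*r₂*r₃ = 1 := by
  obtain ⟨r₁, hr₁m, hr₁⟩ := cubic_root (1/10) (1/5) (by norm_num) (by norm_num) (by norm_num)
  obtain ⟨r₂, hr₂m, hr₂⟩ := cubic_root' (3/2) (8/5) (by norm_num) (by norm_num) (by norm_num)
  obtain ⟨r₃, hr₃m, hr₃⟩ := cubic_root 3 4 (by norm_num) (by norm_num) (by norm_num)
  obtain ⟨h1a, h1b⟩ := hr₁m; obtain ⟨h2a, h2b⟩ := hr₂m; obtain ⟨h3a, h3b⟩ := hr₃m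
  have h12 : r₁ < r₂ := by linarith
  have h23 : r₂ < r₃ := by linarith
  have h13 : r₁ < r₃ := by linarith
  have p12 : r₁^2 + r₁*r₂ + r₂^2 - 5*(r₁+r₂) + 6 = 0 := by
    have h : (r₁ - r₂) * (r₁^2 + r₁*r₂ + r₂^2 - 5*(r₁+r₂) + 6) = 0 := by nlinarith [hr₁, hr₂]
    rcases mul_eq_zero.1 h with h | h
    · exact absurd h (sub_ne_zero.2 h12.ne)
    · exact h
  have p23 : r₂^2 + r₂*r₃ + r₃^2 - 5*(r₂+r₃) + 6 = 0 := by
    have h : (r₂ - r₃) * (r₂^2 + r₂*r₃ + r₃^2 - 5*(r₂+r₃) + 6) = 0 := by nlinarith [hr₂, hr₃]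
    rcases mul_eq_zero.1 h with h | h
    · exact absurd h (sub_ne_zero.2 h23.ne)
    · exact h
  have e1 : r₁ + r₂ + r₃ = 5 := by
    have h : (r₁ - r₃) * (r₁ + r₂ + r₃ - 5) = 0 := by nlinarith [p12, p23]
    rcases mul_eq_zero.1 h with h | h
    · exact absurd h (sub_ne_zero.2 h13.ne)
    · linarith
  have e2 : r₁*r₂ + r₁*r₃ + r₂*r₃ = 6 := by linear_combination -p12 + (r₁+r₂)*e1
  have e3 : r₁*r₂*r₃ = 1 := by linear_combination hr₁ - r₁^2*e1 + r₁*e2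
  exact ⟨r₁, r₂, r₃, by linarith, h12, h23, e1, e2, e3⟩

/-- for `τ > 0`, the third-order RC ladder transfer function
`G(s) = (1/τ³) / (s³ + (5/τ)s² + (6/τ²)s + 1/τ³)` has three real negative poles
`-β₁, -β₂, -β₃` with `0 < β₁ < β₂ < β₃`, and for every `λ` with
`max {β₂, (β₁+β₂+β₃)/3} < λ < β₃`: (1) `Re G(jω - λ) ≥ 0` for all real `ω`, and
(2) `G(s - λ)` has exactly two poles (`λ - β₁` and `λ - β₂`) in the open right half-plane
while `λ - β₃` is in the open left half-plane; hence `G` is strictly `2`-passive with rate `λ`. -/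
theorem rc_ladder_strictly_two_passive (τ : ℝ) (hτ : 0 < τ) :
    ∃ β₁ β₂ β₃ : ℝ, 0 < β₁ ∧ β₁ < β₂ ∧ β₂ < β₃ ∧
      (∀ s : ℂ, s ^ 3 + ((5 / τ : ℝ) : ℂ) * s ^ 2 + ((6 / τ ^ 2 : ℝ) : ℂ) * s
          + ((1 / τ ^ 3 : ℝ) : ℂ)
        = (s + (β₁ : ℂ)) * (s + (β₂ : ℂ)) * (s + (β₃ : ℂ))) ∧
      ∀ lam : ℝ, max β₂ ((β₁ + β₂ + β₃) / 3) < lam → lam < β₃ →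
        (∀ ω : ℝ, 0 ≤ (((1 / τ ^ 3 : ℝ) : ℂ) /
            ((Complex.I * (ω : ℂ) - (lam : ℂ)) ^ 3
              + ((5 / τ : ℝ) : ℂ) * (Complex.I * (ω : ℂ) - (lam : ℂ)) ^ 2
              + ((6 / τ ^ 2 : ℝ) : ℂ) * (Complex.I * (ω : ℂ) - (lam : ℂ))
              + ((1 / τ ^ 3 : ℝ) : ℂ))).re) ∧
        (0 < lam - β₁ ∧ 0 < lam - β₂ ∧ lam - β₃ < 0) := by
  obtain ⟨r₁, r₂, r₃, hr1, h12, h23, e1, e2, e3⟩ := three_roots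
  have hτ' : (τ : ℂ) ≠ 0 := Complex.ofReal_ne_zero.2 hτ.ne'
  have hfact : ∀ s : ℂ, s ^ 3 + ((5 / τ : ℝ) : ℂ) * s ^ 2 + ((6 / τ ^ 2 : ℝ) : ℂ) * s
          + ((1 / τ ^ 3 : ℝ) : ℂ)
        = (s + ((r₁/τ : ℝ) : ℂ)) * (s + ((r₂/τ : ℝ) : ℂ)) * (s + ((r₃/τ : ℝ) : ℂ)) := by
    intro s
    have c1 : (r₁:ℂ) + r₂ + r₃ = 5 := by exact_mod_cast congrArg (Complex.ofReal) e1
    have c2 : (r₁:ℂ)*r₂ + r₁*r₃ + r₂*r₃ = 6 := by exact_mod_cast congrArg (Complex.ofReal) e2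
    have c3 : (r₁:ℂ)*r₂*r₃ = 1 := by exact_mod_cast congrArg (Complex.ofReal) e3
    push_cast
    linear_combination (-s^2/(τ:ℂ)) * c1 + (-s/(τ:ℂ)^2) * c2 + (-1/(τ:ℂ)^3) * c3
  refine ⟨r₁/τ, r₂/τ, r₃/τ, by positivity, (div_lt_div_iff_of_pos_right hτ).2 h12, (div_lt_div_iff_of_pos_right hτ).2 h23, hfact, ?_⟩
  intro lam hmax hlt
  have hβ2 : r₂ / τ < lam := lt_of_le_of_lt (le_max_left _ _) hmax
  have hβ1 : r₁ / τ < lam := by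
    have : r₁ / τ < r₂ / τ := by gcongr
    linarith
  have hsum : (r₁/τ + r₂/τ + r₃/τ) / 3 < lam := lt_of_le_of_lt (le_max_right _ _) hmax
  refine ⟨?_, by linarith, by linarith, by linarith⟩
  intro ω
  rw [hfact (Complex.I * (ω : ℂ) - (lam : ℂ)), Complex.div_re]
  simp only [Complex.ofReal_re, Complex.ofReal_im, zero_mul, zero_div, add_zero]
  set a₁ : ℝ := r₁/τ - lam with ha₁
  set a₂ : ℝ := r₂/τ - lam with ha₂
  set a₃ : ℝ := r₃/τ - lam with ha₃
  have hre : ((Complex.I * (ω : ℂ) - (lam : ℂ) + ((r₁/τ : ℝ) : ℂ)) *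
      (Complex.I * (ω : ℂ) - (lam : ℂ) + ((r₂/τ : ℝ) : ℂ)) *
      (Complex.I * (ω : ℂ) - (lam : ℂ) + ((r₃/τ : ℝ) : ℂ))).re
      = a₁*a₂*a₃ - (a₁+a₂+a₃)*ω^2 := by
    simp only [Complex.mul_re, Complex.mul_im, Complex.add_re, Complex.add_im,
      Complex.sub_re, Complex.sub_im, Complex.I_re, Complex.I_im,
      Complex.ofReal_re, Complex.ofReal_im, ha₁, ha₂, ha₃]
    ring
  rw [hre]
  have hA1 : a₁ < 0 := by simp [ha₁]; linarith
  have hA2 : a₂ < 0 := by simp [ha₂]; linarith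
  have hA3 : 0 < a₃ := by simp [ha₃]; linarith
  have hS : a₁ + a₂ + a₃ < 0 := by simp [ha₁, ha₂, ha₃]; linarith
  have hDre : 0 ≤ a₁*a₂*a₃ - (a₁+a₂+a₃)*ω^2 := by
    have hp : 0 < a₁*a₂*a₃ := mul_pos (mul_pos_of_neg_of_neg hA1 hA2) hA3
    have hq : 0 ≤ -(a₁+a₂+a₃)*ω^2 := mul_nonneg (by linarith) (sq_nonneg ω)
    nlinarith [hp, hq]
  have hc : (0:ℝ) ≤ 1 / τ ^ 3 := by positivity
  exact div_nonneg (mul_nonneg hc hDre) (Complex.normSq_nonneg _)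
end

section
/- Let 0 < a₁ < b₁, 0 < a₂ < b₂, b₁ > b₂, and a₁ > a₂. Consider G(s) = ((a₂ − a₁)s + a₂b₁ − a₁b₂) / ((s + b₁)(s + b₂)). Then (a₂b₂ − a₁b₁)/(a₂ − a₁) > b₁, and for every λ with λ > (a₂b₂ − a₁b₁)/(a₂ − a₁): (1) Re{ G(jω − λ) } ≥ 0 for all ω ∈ ℝ, and (2) both poles of G(s − λ), namely λ − b₁ and λ − b₂, lie in the open right half-plane; hence G is strictly 2-passive with rate λ. -/
/-- for `0 < a₁ < b₁`, `0 < a₂ < b₂`, `b₁ > b₂` and `a₁ > a₂`, the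
mixed-feedback transfer function `G(s) = ((a₂ - a₁)s + a₂b₁ - a₁b₂) / ((s + b₁)(s + b₂))`
satisfies `(a₂b₂ - a₁b₁)/(a₂ - a₁) > b₁`, and for every `λ > (a₂b₂ - a₁b₁)/(a₂ - a₁)`:
(1) `Re G(jω - λ) ≥ 0` for all real `ω`, and (2) the poles `λ - b₁` and `λ - b₂` of
`G(s - λ)` lie in the open right half-plane; hence `G` is strictly `2`-passive with rate `λ`. -/
theorem mixed_feedback_strictly_two_passive (a₁ a₂ b₁ b₂ : ℝ)
    (ha₁ : 0 < a₁) (hab₁ : a₁ < b₁) (ha₂ : 0 < a₂) (hab₂ : a₂ < b₂) (hb : b₂ < b₁)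
    (ha : a₂ < a₁) :
    b₁ < (a₂ * b₂ - a₁ * b₁) / (a₂ - a₁) ∧
      ∀ lam : ℝ, (a₂ * b₂ - a₁ * b₁) / (a₂ - a₁) < lam →
        (∀ ω : ℝ, 0 ≤ ((((a₂ - a₁ : ℝ) : ℂ) * (Complex.I * (ω : ℂ) - (lam : ℂ))
              + ((a₂ * b₁ - a₁ * b₂ : ℝ) : ℂ)) /
            (((Complex.I * (ω : ℂ) - (lam : ℂ)) + (b₁ : ℂ))
              * ((Complex.I * (ω : ℂ) - (lam : ℂ)) + (b₂ : ℂ)))).re) ∧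
        (0 < lam - b₁ ∧ 0 < lam - b₂) := by
  have hneg : a₂ - a₁ < 0 := by linarith
  constructor
  · rw [lt_div_iff_of_neg hneg]
    nlinarith
  · intro lam hlam
    rw [div_lt_iff_of_neg hneg] at hlam
    have h1 : 0 < lam - b₁ := by nlinarith
    have h2 : 0 < lam - b₂ := by linarith
    refine ⟨?_, h1, h2⟩
    intro ω
    rw [Complex.div_re, ← add_div]
    apply div_nonneg _ (Complex.normSq_nonneg _)
    simp [Complex.add_re, Complex.add_im, Complex.mul_re, Complex.mul_im,
      Complex.sub_re, Complex.sub_im, Complex.I_re, Complex.I_im]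
    have hp : 0 < a₁ * (lam - b₂) - a₂ * (lam - b₁) := by nlinarith
    have hc : 0 < a₁ * (lam - b₁) - a₂ * (lam - b₂) := by nlinarith
    nlinarith [mul_pos hp (mul_pos h1 h2), mul_nonneg (mul_self_nonneg ω) hc.le]
end
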